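/- arXiv:0710.2678 — 7 statements merged into one kernel-verified Lean document; each statement's English description precedes it below -/
import Mathlib

section
/- Let n ∈ ℕ and ε ∈ E_n. (i) For every s ∈ (0,∞), the image of the point (1,s) under M_ε is a point (x,y) with x ≠ 0 and y/x = 2^n / (1/s + 2(ε)₂); hence M_ε maps the line through the origin of slope s onto the line through the origin of slope 2^n/(1/s + 2(ε)₂). (ii) M_ε maps (0,1) to (4^{−n}·2·(ε)₂, 2^{−n}); in particular, if (ε)₂ ≠ 0 the image of the vertical axis is the line through the origin of slope 2^{n−1}/(ε)₂, and if (ε)₂ = 0 the image of the vertical axis is the vertical axis. (iii) M_ε maps (1,0) to (4^{−n}, 0), so the image of the horizontal axis is the horizontal axis. -/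
/-- The shearlet dilation matrix `M_k`: first row `(1/4, k/2)`, second row `(0, 1/2)`. -/
noncomputable def Mmat (k : ℤ) : Matrix (Fin 2) (Fin 2) ℝ :=
  !![1/4, (k : ℝ)/2; 0, 1/2]

/-- `M_ε = M_{ε_n} ⋯ M_{ε_1}` for `ε = (ε_1, …, ε_n)` (0-indexed: `ε_i = ε (i-1)`). -/
noncomputable def Mprod {n : ℕ} (ε : Fin n → ℤ) : Matrix (Fin 2) (Fin 2) ℝ :=
  ((List.ofFn fun i => Mmat (ε i)).reverse).prod

/-- `(ε)₂ = Σ_{j=0}^{n-1} ε_{j+1} 2^j`. -/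
def binVal {n : ℕ} (ε : Fin n → ℤ) : ℤ := ∑ j : Fin n, ε j * 2 ^ (j : ℕ)

/-- The line through the origin of slope `s`. -/
def lineOfSlope (s : ℝ) : Set (Fin 2 → ℝ) := {p | p 1 = s * p 0}

/-!
Every `M_k` is upper triangular with diagonal `(1/4, 1/2)`, and multiplying on the left by
`M_{ε_{n+1}}` adds `ε_{n+1} 2^n` to the binary value, so by induction
`M_ε = [[4^{-n}, 2·4^{-n}(ε)₂], [0, 2^{-n}]]`. A linear map sends the line spanned by `v` to
the line spanned by `M v`, so each claim reduces to computing `M_ε` on a direction vector;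
for `(1, s)` with `s > 0` the first coordinate `4^{-n}(1 + 2(ε)₂ s)` is nonzero because the
digits of `ε` are nonnegative.
-/

open Submodule

section Lines

variable {K : Type*} [Field K]

theorem coe_span_singleton_fin_two {v : Fin 2 → K} (hv : v ≠ 0) :
    (span K {v} : Set (Fin 2 → K)) = {p | v 0 * p 1 = v 1 * p 0} := by
  ext p
  simp only [SetLike.mem_coe, mem_span_singleton, Set.mem_ofPred_eq]
  constructor
  · rintro ⟨t, rfl⟩
    simp only [Pi.smul_apply, smul_eq_mul]
    ring
  · intro hp
    by_cases h0 : v 0 = 0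
    · have h1 : v 1 ≠ 0 := fun h1 => hv (by ext i; fin_cases i <;> simp [h0, h1])
      refine ⟨p 1 / v 1, funext <| Fin.forall_fin_two.2 ⟨?_, ?_⟩⟩
      · simp only [h0, zero_mul, zero_eq_mul] at hp
        simp [hp.resolve_left h1, h0]
      · simp [h1]
    · refine ⟨p 0 / v 0, funext <| Fin.forall_fin_two.2 ⟨?_, ?_⟩⟩
      · simp [h0]
      · simp only [Pi.smul_apply, smul_eq_mul]
        field_simp
        linear_combination -hp

theorem coe_span_singleton_eq_vertical {v : Fin 2 → K} (h0 : v 0 = 0) (h1 : v 1 ≠ 0) :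
    (span K {v} : Set (Fin 2 → K)) = {p | p 0 = 0} := by
  rw [coe_span_singleton_fin_two fun hv => h1 (by simp [hv])]
  ext p
  simp [h0, h1]

theorem coe_span_singleton_eq_horizontal {v : Fin 2 → K} (h0 : v 0 ≠ 0) (h1 : v 1 = 0) :
    (span K {v} : Set (Fin 2 → K)) = {p | p 1 = 0} := by
  rw [coe_span_singleton_fin_two fun hv => h0 (by simp [hv])]
  ext p
  simp [h0, h1]

theorem image_mulVec_span_singleton {m n : Type*} [Fintype n] (M : Matrix m n K) (v : n → K) :
    M.mulVec '' (span K {v} : Set (n → K)) = span K {M.mulVec v} := by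
  rw [← Matrix.coe_mulVecLin, ← map_coe, map_span, Set.image_singleton]

theorem image_mulVec_vertical {m : Type*} (M : Matrix m (Fin 2) K) :
    M.mulVec '' {p | p 0 = 0} = span K {M.mulVec ![0, 1]} := by
  rw [← coe_span_singleton_eq_vertical (v := ![0, 1]) (by simp) (by simp),
    image_mulVec_span_singleton]

theorem image_mulVec_horizontal {m : Type*} (M : Matrix m (Fin 2) K) :
    M.mulVec '' {p | p 1 = 0} = span K {M.mulVec ![1, 0]} := by
  rw [← coe_span_singleton_eq_horizontal (v := ![1, 0]) (by simp) (by simp),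
    image_mulVec_span_singleton]

end Lines

theorem coe_span_singleton_eq_lineOfSlope {v : Fin 2 → ℝ} (h0 : v 0 ≠ 0) :
    (span ℝ {v} : Set (Fin 2 → ℝ)) = lineOfSlope (v 1 / v 0) := by
  rw [coe_span_singleton_fin_two fun hv => h0 (by simp [hv])]
  ext p
  simp only [lineOfSlope, Set.mem_ofPred_eq]
  rw [div_mul_eq_mul_div, eq_div_iff h0]
  constructor <;> intro h <;> linarith

theorem image_mulVec_lineOfSlope (M : Matrix (Fin 2) (Fin 2) ℝ) {s : ℝ}
    (h : (M.mulVec ![1, s]) 0 ≠ 0) :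
    M.mulVec '' lineOfSlope s = lineOfSlope ((M.mulVec ![1, s]) 1 / (M.mulVec ![1, s]) 0) := by
  have hline : lineOfSlope s = span ℝ {![1, s]} := by
    simpa using (coe_span_singleton_eq_lineOfSlope (v := ![1, s]) one_ne_zero).symm
  rw [hline, image_mulVec_span_singleton, coe_span_singleton_eq_lineOfSlope h]

theorem Mprod_succ {n : ℕ} (ε : Fin (n + 1) → ℤ) :
    Mprod ε = Mmat (ε (Fin.last n)) * Mprod fun i => ε i.castSucc := by
  rw [Mprod, Mprod, List.ofFn_succ', List.concat_eq_append, List.reverse_append]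
  simp

theorem binVal_succ {n : ℕ} (ε : Fin (n + 1) → ℤ) :
    binVal ε = binVal (fun i => ε i.castSucc) + ε (Fin.last n) * 2 ^ n := by
  simp [binVal, Fin.sum_univ_castSucc]

theorem binVal_nonneg {n : ℕ} {ε : Fin n → ℤ} (hε : ∀ i, 0 ≤ ε i) : 0 ≤ binVal ε :=
  Finset.sum_nonneg fun i _ => mul_nonneg (hε i) (by positivity)

theorem Mprod_eq {n : ℕ} (ε : Fin n → ℤ) :
    Mprod ε =
      !![((2:ℝ)⁻¹ ^ n) ^ 2, 2 * ((2:ℝ)⁻¹ ^ n) ^ 2 * binVal ε; 0, (2:ℝ)⁻¹ ^ n] := by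
  induction n with
  | zero => simp [Mprod, binVal, Matrix.one_fin_two]
  | succ n ih =>
    rw [Mprod_succ, ih, Mmat, Matrix.mul_fin_two, binVal_succ]
    ext i j
    fin_cases i <;> fin_cases j <;> simp [pow_succ] <;> field_simp <;> ring

theorem Mprod_mulVec {n : ℕ} (ε : Fin n → ℤ) (x y : ℝ) :
    (Mprod ε).mulVec ![x, y] =
      ![((2:ℝ)⁻¹ ^ n) ^ 2 * (x + 2 * binVal ε * y), (2:ℝ)⁻¹ ^ n * y] := by
  rw [Mprod_eq]
  ext i
  fin_cases i <;> simp [Matrix.mulVec, dotProduct, Fin.sum_univ_two]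
  ring

/-- (i) For `s ∈ (0,∞)` the image of `(1,s)` under `M_ε` is a point `(x,y)` with `x ≠ 0`
and `y/x = 2^n/(1/s + 2(ε)₂)`, and `M_ε` maps the line of slope `s` onto the line of
slope `2^n/(1/s + 2(ε)₂)`. (ii) `M_ε` maps `(0,1)` to `(4^{-n}·2·(ε)₂, 2^{-n})`;
if `(ε)₂ ≠ 0` the image of the vertical axis is the line of slope `2^{n-1}/(ε)₂`, and
if `(ε)₂ = 0` the image of the vertical axis is the vertical axis. (iii) `M_ε` maps
`(1,0)` to `(4^{-n},0)` and the image of the horizontal axis is the horizontal axis. -/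
theorem stmt2 (n : ℕ) (ε : Fin n → ℤ) (hε : ∀ i, ε i = 0 ∨ ε i = 1) :
    (∀ s : ℝ, 0 < s →
      ((Mprod ε).mulVec ![1, s]) 0 ≠ 0 ∧
      ((Mprod ε).mulVec ![1, s]) 1 / ((Mprod ε).mulVec ![1, s]) 0
        = (2:ℝ)^n / (1/s + 2 * (binVal ε : ℝ)) ∧
      (Mprod ε).mulVec '' lineOfSlope s
        = lineOfSlope ((2:ℝ)^n / (1/s + 2 * (binVal ε : ℝ)))) ∧
    ((Mprod ε).mulVec ![0, 1] = ![(4:ℝ)^(-(n:ℤ)) * 2 * (binVal ε : ℝ), (2:ℝ)^(-(n:ℤ))] ∧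
      (binVal ε ≠ 0 →
        (Mprod ε).mulVec '' {p : Fin 2 → ℝ | p 0 = 0}
          = lineOfSlope ((2:ℝ)^((n:ℤ)-1) / (binVal ε : ℝ))) ∧
      (binVal ε = 0 →
        (Mprod ε).mulVec '' {p : Fin 2 → ℝ | p 0 = 0} = {p : Fin 2 → ℝ | p 0 = 0})) ∧
    ((Mprod ε).mulVec ![1, 0] = ![(4:ℝ)^(-(n:ℤ)), 0] ∧
      (Mprod ε).mulVec '' {p : Fin 2 → ℝ | p 1 = 0} = {p : Fin 2 → ℝ | p 1 = 0}) := by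
  have hB : (0:ℝ) ≤ binVal ε := by
    exact_mod_cast binVal_nonneg fun i => by rcases hε i with h | h <;> simp [h]
  have h2n : (2:ℝ) ^ n = (2⁻¹ ^ n)⁻¹ := by rw [inv_pow, inv_inv]
  have h4 : (4:ℝ) ^ (-(n:ℤ)) = (2⁻¹ ^ n) ^ 2 := by
    rw [zpow_neg, zpow_natCast, ← inv_pow, ← pow_mul, mul_comm, pow_mul]; norm_num
  have h2 : (2:ℝ) ^ (-(n:ℤ)) = 2⁻¹ ^ n := by rw [zpow_neg, zpow_natCast, inv_pow]
  refine ⟨fun s hs => ?_, ⟨?_, fun hB0 => ?_, fun hB0 => ?_⟩, ?_, ?_⟩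
  · have hx : ((Mprod ε).mulVec ![1, s]) 0 ≠ 0 := by
      rw [Mprod_mulVec]; simp only [Matrix.cons_val_zero]; positivity
    have slope : ((Mprod ε).mulVec ![1, s]) 1 / ((Mprod ε).mulVec ![1, s]) 0
        = (2:ℝ) ^ n / (1 / s + 2 * binVal ε) := by
      rw [Mprod_mulVec, h2n]; simp only [Matrix.cons_val_zero, Matrix.cons_val_one]
      field_simp
    exact ⟨hx, slope, slope ▸ image_mulVec_lineOfSlope _ hx⟩
  · rw [Mprod_mulVec, h4, h2]
    simp only [zero_add, mul_one, mul_assoc, mul_comm (2:ℝ)]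
  · have hx : ((Mprod ε).mulVec ![0, 1]) 0 ≠ 0 := by
      rw [Mprod_mulVec]; simp only [Matrix.cons_val_zero]; positivity
    rw [image_mulVec_vertical, coe_span_singleton_eq_lineOfSlope hx, Mprod_mulVec,
      zpow_sub_one₀ two_ne_zero, zpow_natCast, h2n]
    congr 1
    simp only [Matrix.cons_val_zero, Matrix.cons_val_one, zero_add]
    field_simp
  · rw [image_mulVec_vertical]
    exact coe_span_singleton_eq_vertical (by rw [Mprod_mulVec]; simp [hB0])
      (by rw [Mprod_mulVec]; simp)
  · rw [Mprod_mulVec, h4]; simp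
  · rw [image_mulVec_horizontal]
    exact coe_span_singleton_eq_horizontal (by rw [Mprod_mulVec]; simp)
      (by rw [Mprod_mulVec]; simp)
end

section
/- Let s ∈ (0,∞). (a) For every real t ≥ 1/2 and every δ > 0 there exist n ∈ ℕ and ε ∈ E_n such that |2^n/(1/s + 2(ε)₂) − t| < δ; that is, the line through the origin of slope s can be mapped by some M_ε to a line whose slope is within δ of t. (b) For every M > 0 there exist n ∈ ℕ and ε ∈ E_n such that 2^n/(1/s + 2(ε)₂) > M. -/
open Filter

theorem binVal_cons {n : ℕ} (b : ℤ) (ε : Fin n → ℤ) :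
    binVal (Fin.cons b ε : Fin (n + 1) → ℤ) = b + 2 * binVal ε := by
  simp only [binVal, Fin.sum_univ_succ, Fin.cons_zero, Fin.cons_succ, Fin.val_zero,
    Fin.val_succ, pow_zero, mul_one, pow_succ, Finset.mul_sum]
  congr 1
  exact Finset.sum_congr rfl fun j _ => by ring

theorem exists_binVal_eq_of_lt_two_pow {N m : ℕ} (hm : m < 2 ^ N) :
    ∃ ε : Fin N → ℤ, (∀ i, ε i = 0 ∨ ε i = 1) ∧ binVal ε = m := by
  induction N generalizing m with
  | zero => exact ⟨Fin.elim0, fun i => i.elim0, by simp [binVal]; omega⟩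
  | succ N ih =>
    obtain ⟨ε, hbits, hval⟩ := ih (m := m / 2) (by omega)
    refine ⟨Fin.cons ((m % 2 : ℕ) : ℤ) ε, Fin.cases (by simp; omega) hbits, ?_⟩
    rw [binVal_cons, hval]
    omega

/-- Taking `m = ⌊(2^n/t - a)/2⌋` makes `2^n/(a + 2m)` exceed `t` by less than `δ`; the bound
`t ≥ 1/2` is exactly what keeps this `m` below `2^n`. -/
theorem exists_lt_two_pow_abs_div_sub_lt {a t δ : ℝ} {n : ℕ} (ha : 0 < a) (ht : 1 / 2 ≤ t)
    (hδ : 0 < δ) (hna : t * a ≤ 2 ^ n) (hnδ : t * (2 * t / δ + 2) < 2 ^ n) :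
    ∃ m : ℕ, m < 2 ^ n ∧ |2 ^ n / (a + 2 * m) - t| < δ := by
  have ht0 : 0 < t := by linarith
  set y := (2 ^ n / t - a) / 2 with hy
  have hy0 : 0 ≤ y := by
    rw [hy, le_div_iff₀ two_pos, zero_mul, sub_nonneg, le_div_iff₀ ht0]
    linarith
  have hyn : y < 2 ^ n := by
    have : (2 : ℝ) ^ n / t ≤ 2 * 2 ^ n := by
      rw [div_le_iff₀ ht0]; nlinarith [pow_pos (two_pos (α := ℝ)) n]
    rw [hy]; linarith
  refine ⟨⌊y⌋₊, (Nat.floor_lt hy0).2 (by exact_mod_cast hyn), ?_⟩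
  set D := a + 2 * (⌊y⌋₊ : ℝ)
  have hD0 : 0 < D := by positivity
  have hDle : t * D ≤ 2 ^ n := by
    have := Nat.floor_le hy0
    have : D ≤ 2 ^ n / t := by rw [hy] at this; linarith
    rwa [le_div_iff₀ ht0, mul_comm] at this
  have hDgt : 2 ^ n - 2 * t < t * D := by
    have := Nat.lt_floor_add_one y
    have : 2 ^ n / t - 2 < D := by rw [hy] at this; linarith
    rw [sub_lt_iff_lt_add, div_lt_iff₀ ht0] at this
    linarith
  have hδD : 2 * t < δ * D := by
    have : 2 * t / δ < D := lt_of_mul_lt_mul_left (by linarith) ht0.le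
    rw [div_lt_iff₀ hδ] at this
    linarith
  rw [abs_lt, div_sub' hD0.ne', lt_div_iff₀ hD0, div_lt_iff₀ hD0]
  constructor <;> linarith

/-- Let `s ∈ (0,∞)`. (a) For every `t ≥ 1/2` and `δ > 0` there exist `n ∈ ℕ` and
`ε ∈ E_n` with `|2^n/(1/s + 2(ε)₂) − t| < δ`; i.e. the line of slope `s` can be
mapped by some `M_ε` to a line whose slope is within `δ` of `t`.
(b) For every `M > 0` there exist `n ∈ ℕ` and `ε ∈ E_n` with
`2^n/(1/s + 2(ε)₂) > M`. -/
theorem stmt3 (s : ℝ) (hs : 0 < s) :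
    (∀ t : ℝ, 1/2 ≤ t → ∀ δ : ℝ, 0 < δ →
      ∃ (n : ℕ) (ε : Fin n → ℤ), 0 < n ∧ (∀ i, ε i = 0 ∨ ε i = 1) ∧
        |(2:ℝ)^n / (1/s + 2 * (binVal ε : ℝ)) - t| < δ) ∧
    (∀ M : ℝ, 0 < M →
      ∃ (n : ℕ) (ε : Fin n → ℤ), 0 < n ∧ (∀ i, ε i = 0 ∨ ε i = 1) ∧
        M < (2:ℝ)^n / (1/s + 2 * (binVal ε : ℝ))) := by
  have large (C : ℝ) : ∀ᶠ n : ℕ in atTop, C < (2 : ℝ) ^ n :=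
    (tendsto_pow_atTop_atTop_of_one_lt one_lt_two).eventually_gt_atTop C
  constructor
  · intro t ht δ hδ
    obtain ⟨n, hn0, hna, hnδ⟩ := ((eventually_gt_atTop 0).and
      ((large (t * (1 / s))).and (large (t * (2 * t / δ + 2))))).exists
    obtain ⟨m, hm, hclose⟩ := exists_lt_two_pow_abs_div_sub_lt (one_div_pos.2 hs) ht hδ hna.le hnδ
    obtain ⟨ε, hbits, hval⟩ := exists_binVal_eq_of_lt_two_pow hm
    exact ⟨n, ε, hn0, hbits, by rwa [hval, Int.cast_natCast]⟩
  · intro M _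
    obtain ⟨n, hn0, hnM⟩ := ((eventually_gt_atTop 0).and (large (M / s))).exists
    refine ⟨n, 0, hn0, fun _ => Or.inl rfl, ?_⟩
    rwa [binVal, Finset.sum_eq_zero (fun _ _ => zero_mul _), Int.cast_zero, mul_zero, add_zero,
      div_div_eq_mul_div, div_one, ← div_lt_iff₀ hs]
end

section
/- For every n ∈ ℕ and ε ∈ E_n, the product W_ε = W_{ε_n}···W_{ε₁} equals the 2×2 matrix with first row (4^n, −4^n·2·[ε]₂) and second row (0, 2^n); moreover W_ε = U_ε W₀^n = W₀^n V_ε, where U_ε is the matrix with rows (1, −2^{n+1}[ε]₂), (0,1) and V_ε is the rational matrix with rows (1, −2[ε]₂), (0,1); and in addition U_ε = V_ε^{2^n}. -/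
/-- `W_k` for `k ∈ {0,1}`: `W_0 = !![4,0;0,2]`, `W_1 = !![4,-4;0,2]`, viewed over ℚ. -/
def Wm (k : ℤ) : Matrix (Fin 2) (Fin 2) ℚ := !![4, -4 * (k : ℚ); 0, 2]

/-- `W_ε = W_{ε_n} ⋯ W_{ε_1}` for `ε = (ε_1, …, ε_n)` (0-indexed: `ε_i = ε (i-1)`). -/
def Wprod {n : ℕ} (ε : Fin n → ℤ) : Matrix (Fin 2) (Fin 2) ℚ :=
  ((List.ofFn fun i => Wm (ε i)).reverse).prod

/-- `[ε]₂ = Σ_{j=1}^n ε_j 2^{-j} ∈ ℚ`. -/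
def dyadVal {n : ℕ} (ε : Fin n → ℤ) : ℚ := ∑ j : Fin n, (ε j : ℚ) * 2 ^ (-(j : ℤ) - 1)

lemma shear_pow (a : ℚ) (k : ℕ) :
    (!![1, a; 0, 1] : Matrix (Fin 2) (Fin 2) ℚ)^k = !![1, (k : ℚ) * a; 0, 1] := by
  induction k with
  | zero => simp [Matrix.one_fin_two]
  | succ k ih =>
    rw [pow_succ, ih, Matrix.mul_fin_two]
    push_cast
    ring_nf

lemma W0_pow (n : ℕ) : (Wm 0)^n = !![(4:ℚ)^n, 0; 0, (2:ℚ)^n] := by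
  induction n with
  | zero => simp [Matrix.one_fin_two]
  | succ n ih =>
    rw [pow_succ, ih, Wm, Matrix.mul_fin_two]
    ring_nf

lemma Wprod_succ {n : ℕ} (ε : Fin (n+1) → ℤ) :
    Wprod ε = Wm (ε (Fin.last n)) * Wprod (fun i : Fin n => ε i.castSucc) := by
  unfold Wprod
  rw [List.ofFn_succ', List.concat_eq_append, List.reverse_append, List.prod_append]
  simp [Function.comp]

lemma dyadVal_succ {n : ℕ} (ε : Fin (n+1) → ℤ) :
    dyadVal ε = dyadVal (fun i : Fin n => ε i.castSucc)
      + (ε (Fin.last n) : ℚ) * 2 ^ (-(n : ℤ) - 1) := by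
  simp [dyadVal, Fin.sum_univ_castSucc]

lemma key_pow (n : ℕ) : (2:ℚ) ^ (-(n:ℤ)-1) * 4^(n+1) = 2 * 2^n := by
  have h4 : (4:ℚ)^(n+1) = (2:ℚ)^(2*n+2 : ℕ) := by
    rw [show (4:ℚ) = 2^2 by norm_num, ← pow_mul]
    ring_nf
  rw [h4, ← zpow_natCast (2:ℚ) (2*n+2), ← zpow_add₀ (by norm_num : (2:ℚ) ≠ 0)]
  have : (-(n:ℤ)-1 + (2*n+2:ℕ) : ℤ) = (n:ℤ) + 1 := by push_cast; ring
  rw [this, zpow_add₀ (by norm_num : (2:ℚ) ≠ 0), zpow_natCast]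
  ring

lemma main_eq (n : ℕ) (ε : Fin n → ℤ) :
    Wprod ε = !![(4:ℚ)^n, -(4:ℚ)^n * 2 * dyadVal ε; 0, (2:ℚ)^n] := by
  induction n with
  | zero =>
    simp [Wprod, dyadVal, Matrix.one_fin_two]
  | succ n ih =>
    rw [Wprod_succ, ih, dyadVal_succ, Wm, Matrix.mul_fin_two]
    have key := key_pow n
    ext i j
    fin_cases i <;> fin_cases j <;>
      simp [pow_succ] <;>
      try ring
    rw [show ((-1:ℤ) - (n:ℤ)) = (-(n:ℤ) - 1) from by ring]
    linear_combination (2 * (ε (Fin.last n) : ℚ)) * key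

/-- For every `n ∈ ℕ` and `ε ∈ E_n`, `W_ε` equals the matrix with rows
`(4^n, −4^n·2·[ε]₂)` and `(0, 2^n)`; moreover `W_ε = U_ε W₀ⁿ = W₀ⁿ V_ε` with
`U_ε = !![1, −2^{n+1}[ε]₂; 0, 1]` and `V_ε = !![1, −2[ε]₂; 0, 1]`; and `U_ε = V_ε^{2^n}`. -/
theorem stmt4 (n : ℕ) (ε : Fin n → ℤ) (hε : ∀ i, ε i = 0 ∨ ε i = 1) :
    Wprod ε = !![(4:ℚ)^n, -(4:ℚ)^n * 2 * dyadVal ε; 0, (2:ℚ)^n] ∧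
    Wprod ε = !![1, -(2:ℚ)^(n+1) * dyadVal ε; 0, 1] * (Wm 0)^n ∧
    Wprod ε = (Wm 0)^n * !![1, -2 * dyadVal ε; 0, 1] ∧
    !![1, -(2:ℚ)^(n+1) * dyadVal ε; 0, 1] = (!![1, -2 * dyadVal ε; 0, 1])^(2^n) := by
  have hm := main_eq n ε
  have h4 : (4:ℚ)^n = 2^n * 2^n := by
    rw [show (4:ℚ) = 2*2 by norm_num, mul_pow]
  refine ⟨hm, ?_, ?_, ?_⟩
  · rw [hm, W0_pow, Matrix.mul_fin_two]
    ext i j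
    fin_cases i <;> fin_cases j <;> simp <;> rw [h4] <;> ring
  · rw [hm, W0_pow, Matrix.mul_fin_two]
    ext i j
    fin_cases i <;> fin_cases j <;> simp <;> ring
  · rw [shear_pow]
    ext i j
    fin_cases i <;> fin_cases j <;> simp <;> push_cast <;> rw [pow_succ] <;> ring
end

section
/- If the adaptive directional subdivision scheme with masks a₀, a₁ converges in C(ℝ²), then both masks satisfy the sum rule of order 0: for each η ∈ {0,1} and every α ∈ ℤ², Σ_{β∈ℤ²} a_η(α + W_η β) = 1. -/
/-- Bi-infinite two-dimensional integer index set `ℤ²`. -/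
abbrev Z2 : Type := Fin 2 → ℤ

/-- The scaling matrix `W₀` with rows `(4,0)` and `(0,2)`. -/
def W0 : Matrix (Fin 2) (Fin 2) ℤ := !![4, 0; 0, 2]

/-- The scaling matrix `W₁` with rows `(4,-4)` and `(0,2)`. -/
def W1 : Matrix (Fin 2) (Fin 2) ℤ := !![4, -4; 0, 2]

/-- `W_η` for `η ∈ {0,1}`. -/
def Wsel : Fin 2 → Matrix (Fin 2) (Fin 2) ℤ := ![W0, W1]

/-- A sequence `c : ℤ² → ℝ` is bounded. -/
def Bdd (c : Z2 → ℝ) : Prop := ∃ K : ℝ, ∀ α, |c α| ≤ K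

/-- The subdivision operator `S_{a,W} c = Σ_α a(· − Wα) c(α)`. -/
noncomputable def subd (a : Z2 → ℝ) (W : Matrix (Fin 2) (Fin 2) ℤ) (c : Z2 → ℝ) : Z2 → ℝ :=
  fun β => ∑' α : Z2, a (β - W.mulVec α) * c α

/-- The Dirac sequence `δ` on `ℤ²`. -/
noncomputable def delta : Z2 → ℝ := fun α => if α = 0 then 1 else 0

/-- The iterated scheme `S_ε = S_{ε_n} ⋯ S_{ε_1}` applied to `c`, for
`ε = [ε₁, …, ε_n]` (the head `ε₁` is applied first). -/
noncomputable def Ssub (a : Fin 2 → Z2 → ℝ) : List (Fin 2) → (Z2 → ℝ) → (Z2 → ℝ)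
  | [], c => c
  | η :: rest, c => Ssub a rest (subd (a η) (Wsel η) c)

/-- `W_ε = W_{ε_n} ⋯ W_{ε_1}` for `ε = [ε₁, …, ε_n]`. -/
def WprodL : List (Fin 2) → Matrix (Fin 2) (Fin 2) ℤ
  | [] => 1
  | η :: rest => WprodL rest * Wsel η

/-- `W_ε` viewed as a real matrix. -/
noncomputable def WR (ε : List (Fin 2)) : Matrix (Fin 2) (Fin 2) ℝ :=
  (WprodL ε).map (Int.cast : ℤ → ℝ)

/-- The initial segment `P_n ε = (ε₁, …, ε_n)` of `ε ∈ E_∞ = {0,1}^ℕ`. -/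
def Pn (ε : ℕ → Fin 2) (n : ℕ) : List (Fin 2) := List.ofFn (fun i : Fin n => ε i)

/-- Cast of an integer vector to `ℝ²`. -/
noncomputable def castV (α : Z2) : Fin 2 → ℝ := fun i => (α i : ℝ)

noncomputable def Minv : Fin 2 → Matrix (Fin 2) (Fin 2) ℝ :=
  ![!![1/4, 0; 0, 1/2], !![1/4, 1/2; 0, 1/2]]

noncomputable def WselR (η : Fin 2) : Matrix (Fin 2) (Fin 2) ℝ := (Wsel η).map Int.cast

lemma mul_Minv (η : Fin 2) : WselR η * Minv η = 1 := by
  fin_cases η <;>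
    · ext i j
      fin_cases i <;> fin_cases j <;>
        simp [Minv, WselR, Wsel, W0, W1, Matrix.mul_apply, Fin.sum_univ_two,
          Matrix.one_apply] <;> norm_num

lemma Minv_mul (η : Fin 2) : Minv η * WselR η = 1 := by
  fin_cases η <;>
    · ext i j
      fin_cases i <;> fin_cases j <;>
        simp [Minv, WselR, Wsel, W0, W1, Matrix.mul_apply, Fin.sum_univ_two,
          Matrix.one_apply] <;> norm_num

lemma Minv_contract (η : Fin 2) (v : Fin 2 → ℝ) :
    ‖(Minv η).mulVec v‖ ≤ 3/4 * ‖v‖ := by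
  have h0 : ‖v 0‖ ≤ ‖v‖ := norm_le_pi_norm v 0
  have h1 : ‖v 1‖ ≤ ‖v‖ := norm_le_pi_norm v 1
  have hv : (0:ℝ) ≤ ‖v‖ := norm_nonneg v
  rw [pi_norm_le_iff_of_nonneg (by positivity)]
  intro i
  fin_cases η <;> fin_cases i <;>
    · simp only [Minv, Matrix.mulVec, dotProduct, Fin.sum_univ_two, Fin.mk_zero,
        Fin.mk_one, Fin.isValue, Matrix.cons_val', Matrix.cons_val_zero, Matrix.cons_val_one,
        Matrix.head_cons, Matrix.empty_val', Matrix.cons_val_fin_one, Matrix.head_fin_const, Matrix.of_apply]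
      norm_num
      rw [Real.norm_eq_abs] at *
      have h2 := abs_add_le ((1/4:ℝ) * v 0) ((1/2:ℝ) * v 1)
      have h3 := abs_add_le ((0:ℝ) * v 0) ((1/2:ℝ) * v 1)
      simp only [abs_mul] at *
      have e4 : |(1/4:ℝ)| = 1/4 := by norm_num
      have e2 : |(1/2:ℝ)| = 1/2 := by norm_num
      have e0 : |(0:ℝ)| = 0 := by norm_num
      rw [e4, e2] at h2
      rw [e0, e2] at h3
      linarith

lemma Minv_pow_contract (η : Fin 2) (n : ℕ) (v : Fin 2 → ℝ) :
    ‖(Minv η ^ n).mulVec v‖ ≤ (3/4)^n * ‖v‖ := by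
  induction n with
  | zero => simp [Matrix.one_mulVec]
  | succ n ih =>
    have e : (Minv η ^ (n+1)).mulVec v = (Minv η).mulVec ((Minv η ^ n).mulVec v) := by
      rw [Matrix.mulVec_mulVec, ← pow_succ']
    rw [e]
    calc ‖(Minv η).mulVec ((Minv η ^ n).mulVec v)‖ ≤ 3/4 * ‖(Minv η ^ n).mulVec v‖ :=
        Minv_contract η _
      _ ≤ 3/4 * ((3/4)^n * ‖v‖) := by
          exact mul_le_mul_of_nonneg_left ih (by norm_num)
      _ = (3/4)^(n+1) * ‖v‖ := by ring

lemma Pn_const (η : Fin 2) (n : ℕ) : Pn (fun _ => η) n = List.replicate n η := by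
  simp [Pn, List.ofFn_const]

lemma Ssub_append (a : Fin 2 → Z2 → ℝ) (l : List (Fin 2)) (η : Fin 2) (c : Z2 → ℝ) :
    Ssub a (l ++ [η]) c = subd (a η) (Wsel η) (Ssub a l c) := by
  induction l generalizing c with
  | nil => rfl
  | cons x l ih =>
    show Ssub a (l ++ [η]) (subd (a x) (Wsel x) c) = _
    rw [ih]
    rfl

lemma WprodL_append (l : List (Fin 2)) (η : Fin 2) :
    WprodL (l ++ [η]) = Wsel η * WprodL l := by
  induction l with
  | nil => simp [WprodL]
  | cons x l ih =>
    show WprodL (l ++ [η]) * Wsel x = _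
    rw [ih, mul_assoc]
    rfl

lemma WprodL_replicate (η : Fin 2) (n : ℕ) :
    WprodL (List.replicate n η) = Wsel η ^ n := by
  induction n with
  | zero => rfl
  | succ n ih =>
    rw [List.replicate_succ', WprodL_append, ih, ← pow_succ']

lemma WR_replicate (η : Fin 2) (n : ℕ) :
    WR (List.replicate n η) = (WselR η) ^ n := by
  rw [WR, WprodL_replicate, WselR]
  exact map_pow ((Int.castRingHom ℝ).mapMatrix) (Wsel η) n

lemma my_pow_mul_pow_eq_one {M : Type*} [Monoid M] {A B : M} (h1 : A * B = 1) (h2 : B * A = 1)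
    (n : ℕ) : A ^ n * B ^ n = 1 := by
  induction n with
  | zero => simp
  | succ n ih =>
    rw [pow_succ A, pow_succ' B, mul_assoc, ← mul_assoc A, h1, one_mul, ih]

lemma WR_inv (η : Fin 2) (n : ℕ) :
    (WR (List.replicate n η))⁻¹ = Minv η ^ n := by
  rw [WR_replicate]
  exact Matrix.inv_eq_right_inv (my_pow_mul_pow_eq_one (mul_Minv η) (Minv_mul η) n)

lemma castV_mulVec (η : Fin 2) (β : Z2) :
    castV ((Wsel η).mulVec β) = (WselR η).mulVec (castV β) := by
  funext i
  simpa [castV, WselR, Function.comp] using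
    (Int.castRingHom ℝ).map_mulVec (Wsel η) β i

lemma castV_add (α β : Z2) : castV (α + β) = castV α + castV β := by
  funext i; simp [castV]

lemma mulVec_injective (η : Fin 2) : Function.Injective ((Wsel η).mulVec) := by
  intro x y h
  have h2 : (WselR η).mulVec (castV x) = (WselR η).mulVec (castV y) := by
    rw [← castV_mulVec, ← castV_mulVec, h]
  have h3 : castV x = castV y := by
    have := congrArg ((Minv η).mulVec) h2
    rwa [Matrix.mulVec_mulVec, Matrix.mulVec_mulVec, Minv_mul, Matrix.one_mulVec,
      Matrix.one_mulVec] at this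
  funext i
  exact Int.cast_injective (α := ℝ) (by simpa [castV] using congrFun h3 i)

lemma castV_sub (α β : Z2) : castV (α - β) = castV α - castV β := by
  funext i; simp [castV]

lemma T_finite (a : Fin 2 → Z2 → ℝ) (ha : ∀ η, (Function.support (a η)).Finite)
    (η : Fin 2) (α : Z2) :
    {δ : Z2 | a η (α + (Wsel η).mulVec δ) ≠ 0}.Finite := by
  have hg : Function.Injective (fun δ : Z2 => α + (Wsel η).mulVec δ) := by
    intro x y h
    exact mulVec_injective η (by simpa using h)
  exact Set.Finite.preimage hg.injOn (ha η)

lemma subd_shift (a : Fin 2 → Z2 → ℝ) (η : Fin 2) (c : Z2 → ℝ) (β α : Z2) :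
    subd (a η) (Wsel η) c ((Wsel η).mulVec β + α)
      = ∑' δ : Z2, a η (α + (Wsel η).mulVec δ) * c (β - δ) := by
  rw [subd]
  rw [← Equiv.tsum_eq (Equiv.subLeft β)
    (fun γ => a η ((Wsel η).mulVec β + α - (Wsel η).mulVec γ) * c γ)]
  congr 1
  funext δ
  have h : (Wsel η).mulVec β + α - (Wsel η).mulVec (β - δ) = α + (Wsel η).mulVec δ := by
    rw [Matrix.mulVec_sub]; abel
  simp only [Equiv.subLeft_apply, h]

lemma exists_N (C τ : ℝ) (hτ : 0 < τ) : ∃ N : ℕ, ∀ n ≥ N, (3/4:ℝ)^n * C < τ := by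
  have h : Filter.Tendsto (fun n : ℕ => (3/4:ℝ)^n * C) Filter.atTop (nhds 0) := by
    have := tendsto_pow_atTop_nhds_zero_of_lt_one (by norm_num : (0:ℝ) ≤ 3/4)
      (by norm_num : (3/4:ℝ) < 1)
    simpa using this.mul_const C
  have h2 := (Metric.tendsto_atTop.mp h) τ hτ
  obtain ⟨N, hN⟩ := h2
  exact ⟨N, fun n hn => by
    have := hN n hn
    rw [Real.dist_eq, sub_zero] at this
    exact lt_of_le_of_lt (le_abs_self _) this⟩


/-- The adaptive directional subdivision scheme with masks `a₀, a₁` converges in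
`C(ℝ²)`: for every `ε ∈ E_∞` there is a nonzero, uniformly continuous `f_ε`
with `lim_{n→∞} sup_{α∈ℤ²} |f_ε(W_{P_nε}⁻¹ α) − S_{P_nε} δ (α)| = 0`. -/
def SchemeConverges (a : Fin 2 → Z2 → ℝ) : Prop :=
  ∀ ε : ℕ → Fin 2, ∃ f : (Fin 2 → ℝ) → ℝ, f ≠ 0 ∧ UniformContinuous f ∧
    ∀ η : ℝ, 0 < η → ∃ N : ℕ, ∀ n ≥ N, ∀ α : Z2,
      |f ((WR (Pn ε n))⁻¹.mulVec (castV α)) - Ssub a (Pn ε n) delta α| < η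

/-- If the adaptive directional subdivision scheme with masks `a₀, a₁` converges in
`C(ℝ²)`, then both masks satisfy the sum rule of order 0:
`Σ_β a_η(α + W_η β) = 1` for each `η ∈ {0,1}` and all `α ∈ ℤ²`. -/
theorem stmt7 (a : Fin 2 → Z2 → ℝ) (ha : ∀ η, (Function.support (a η)).Finite)
    (hconv : SchemeConverges a) :
    ∀ η : Fin 2, ∀ α : Z2, ∑' β : Z2, a η (α + (Wsel η).mulVec β) = 1 := by
  classical
  intro η α
  set W := Wsel η with hW
  set P := Minv η with hP
  obtain ⟨f, hf0, hfu, hfc⟩ := hconv (fun _ => η)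
  -- convergence restated with Minv powers
  set c : ℕ → Z2 → ℝ := fun n => Ssub a (List.replicate n η) delta with hc
  have hfc' : ∀ θ : ℝ, 0 < θ → ∃ N : ℕ, ∀ n ≥ N, ∀ γ : Z2,
      |f ((P ^ n).mulVec (castV γ)) - c n γ| < θ := by
    intro θ hθ
    obtain ⟨N, hN⟩ := hfc θ hθ
    refine ⟨N, fun n hn γ => ?_⟩
    have := hN n hn γ
    rwa [Pn_const, WR_inv] at this
  -- recursion
  have hrec : ∀ n : ℕ, c (n + 1) = subd (a η) W (c n) := by
    intro n
    rw [hc]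
    simp only
    rw [List.replicate_succ', Ssub_append]
  -- the support finset
  have hTfin := T_finite a ha η α
  set T : Finset Z2 := hTfin.toFinset with hT
  have hmemT : ∀ δ : Z2, δ ∈ T ↔ a η (α + W.mulVec δ) ≠ 0 := fun δ =>
    Set.Finite.mem_toFinset _
  set s : ℝ := ∑ δ ∈ T, a η (α + W.mulVec δ) with hs
  have htsum : ∑' β : Z2, a η (α + W.mulVec β) = s := by
    refine tsum_eq_sum (fun b hb => ?_)
    by_contra hne
    exact hb ((hmemT b).2 hne)
  rw [htsum]
  -- x₀ with f x₀ ≠ 0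
  obtain ⟨x₀, hx₀⟩ := Function.ne_iff.mp hf0
  simp only [Pi.zero_apply] at hx₀
  -- constants
  set A : ℝ := ∑ δ ∈ T, |a η (α + W.mulVec δ)| with hA
  have hA0 : 0 ≤ A := Finset.sum_nonneg fun _ _ => abs_nonneg _
  have hsA : |s| ≤ A := Finset.abs_sum_le_sum_abs _ _
  set C : ℝ := 1 + ‖castV α‖ + ∑ δ ∈ T, ‖castV δ‖ with hCdef
  have hC1 : (1:ℝ) ≤ C := by
    have h1 : (0:ℝ) ≤ ‖castV α‖ := norm_nonneg _
    have h2 : (0:ℝ) ≤ ∑ δ ∈ T, ‖castV δ‖ := Finset.sum_nonneg fun _ _ => norm_nonneg _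
    simp only [hCdef]; linarith
  have hCα : ‖castV α‖ ≤ C := by
    have h2 : (0:ℝ) ≤ ∑ δ ∈ T, ‖castV δ‖ := Finset.sum_nonneg fun _ _ => norm_nonneg _
    simp only [hCdef]; linarith
  have hCδ : ∀ δ ∈ T, ‖castV δ‖ ≤ C := by
    intro δ hδ
    have h2 : ‖castV δ‖ ≤ ∑ δ ∈ T, ‖castV δ‖ :=
      Finset.single_le_sum (fun i _ => norm_nonneg (castV i)) hδ
    have h1 : (0:ℝ) ≤ ‖castV α‖ := norm_nonneg _
    simp only [hCdef]; linarith
  -- main estimate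
  have key : ∀ θ : ℝ, 0 < θ → |f x₀ - s * f x₀| < θ := by
    intro θ hθ
    have hB : (0:ℝ) < A + 1 := by linarith
    set θ' : ℝ := θ / (8 * (A + 1)) with hθ'def
    have hθ'pos : 0 < θ' := by positivity
    obtain ⟨τ, hτpos, hτ⟩ := Metric.uniformContinuous_iff.mp hfu θ' hθ'pos
    obtain ⟨N₁, hN₁⟩ := hfc' θ' hθ'pos
    obtain ⟨N₂, hN₂⟩ := exists_N C τ hτpos
    set n : ℕ := max N₁ N₂ with hn
    have hnN₁ : n ≥ N₁ := le_max_left _ _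
    have hn1N₁ : n + 1 ≥ N₁ := le_trans hnN₁ (Nat.le_succ n)
    have hnN₂ : n ≥ N₂ := le_max_right _ _
    have hsmall : (3/4:ℝ)^n * C < τ := hN₂ n hnN₂
    have hsmall1 : (3/4:ℝ)^(n+1) * C < τ := hN₂ (n+1) (le_trans hnN₂ (Nat.le_succ n))
    -- the rounded lattice point
    set β : Z2 := fun i => round ((((WselR η)^n).mulVec x₀) i) with hβ
    have hround : ‖castV β - ((WselR η)^n).mulVec x₀‖ ≤ 1/2 := by
      rw [pi_norm_le_iff_of_nonneg (by norm_num)]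
      intro i
      have he : (castV β - ((WselR η)^n).mulVec x₀) i
          = ((round ((((WselR η)^n).mulVec x₀) i) : ℤ) : ℝ) - (((WselR η)^n).mulVec x₀) i := rfl
      rw [he, Real.norm_eq_abs, abs_sub_comm]
      exact abs_sub_round ((((WselR η)^n).mulVec x₀) i)
    have hPW : (P^n) * (WselR η)^n = 1 := my_pow_mul_pow_eq_one (Minv_mul η) (mul_Minv η) n
    -- F1
    have hF1 : dist ((P^n).mulVec (castV β)) x₀ < τ := by
      have he : (P^n).mulVec (castV β) - x₀
          = (P^n).mulVec (castV β - ((WselR η)^n).mulVec x₀) := by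
        rw [Matrix.mulVec_sub, Matrix.mulVec_mulVec, hPW, Matrix.one_mulVec]
      rw [dist_eq_norm, he]
      calc ‖(P^n).mulVec (castV β - ((WselR η)^n).mulVec x₀)‖
          ≤ (3/4)^n * ‖castV β - ((WselR η)^n).mulVec x₀‖ := Minv_pow_contract η n _
        _ ≤ (3/4)^n * (1/2) := by
            exact mul_le_mul_of_nonneg_left hround (by positivity)
        _ ≤ (3/4)^n * C := by
            refine mul_le_mul_of_nonneg_left (by linarith) (by positivity)
        _ < τ := hsmall
    -- F2
    have hF2 : (P^(n+1)).mulVec (castV (W.mulVec β + α))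
        = (P^n).mulVec (castV β) + (P^(n+1)).mulVec (castV α) := by
      rw [castV_add, castV_mulVec, Matrix.mulVec_add]
      congr 1
      have hin : P.mulVec ((WselR η).mulVec (castV β)) = castV β := by
        rw [Matrix.mulVec_mulVec, Minv_mul, Matrix.one_mulVec]
      rw [pow_succ, ← Matrix.mulVec_mulVec, hin]
    -- F3
    have hF3 : dist ((P^(n+1)).mulVec (castV (W.mulVec β + α))) ((P^n).mulVec (castV β)) < τ := by
      rw [hF2, dist_eq_norm, add_sub_cancel_left]
      calc ‖(P^(n+1)).mulVec (castV α)‖ ≤ (3/4)^(n+1) * ‖castV α‖ := Minv_pow_contract η _ _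
        _ ≤ (3/4)^(n+1) * C := mul_le_mul_of_nonneg_left hCα (by positivity)
        _ < τ := hsmall1
    -- F4 : convergence at level n+1
    have hF4 : |f ((P^(n+1)).mulVec (castV (W.mulVec β + α))) - c (n+1) (W.mulVec β + α)| < θ' :=
      hN₁ (n+1) hn1N₁ _
    -- F5
    have hF5 : c (n+1) (W.mulVec β + α) = ∑ δ ∈ T, a η (α + W.mulVec δ) * c n (β - δ) := by
      rw [hrec n, subd_shift]
      refine tsum_eq_sum (fun b hb => ?_)
      have : a η (α + W.mulVec b) = 0 := by
        by_contra hne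
        exact hb ((hmemT b).2 hne)
      rw [this, zero_mul]
    -- F6
    have hF6 : ∀ δ ∈ T, |c n (β - δ) - f ((P^n).mulVec (castV β))| ≤ 2 * θ' := by
      intro δ hδ
      have h1 : |f ((P^n).mulVec (castV (β - δ))) - c n (β - δ)| < θ' := hN₁ n hnN₁ _
      have h2 : dist ((P^n).mulVec (castV (β - δ))) ((P^n).mulVec (castV β)) < τ := by
        rw [dist_eq_norm, ← Matrix.mulVec_sub, castV_sub]
        have : castV β - castV δ - castV β = -(castV δ) := by abel
        rw [this]
        calc ‖(P^n).mulVec (-(castV δ))‖ ≤ (3/4)^n * ‖-(castV δ)‖ := Minv_pow_contract η _ _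
          _ = (3/4)^n * ‖castV δ‖ := by rw [norm_neg]
          _ ≤ (3/4)^n * C := mul_le_mul_of_nonneg_left (hCδ δ hδ) (by positivity)
          _ < τ := hsmall
      have h3 : |f ((P^n).mulVec (castV (β - δ))) - f ((P^n).mulVec (castV β))| < θ' := by
        have := hτ h2
        rwa [Real.dist_eq] at this
      calc |c n (β - δ) - f ((P^n).mulVec (castV β))|
          ≤ |c n (β - δ) - f ((P^n).mulVec (castV (β - δ)))|
            + |f ((P^n).mulVec (castV (β - δ))) - f ((P^n).mulVec (castV β))| := by
            exact abs_sub_le _ _ _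
        _ ≤ 2 * θ' := by
            rw [abs_sub_comm] at h1
            linarith
    -- F7
    have hF7 : |c (n+1) (W.mulVec β + α) - s * f ((P^n).mulVec (castV β))| ≤ 2 * θ' * A := by
      rw [hF5, hs, Finset.sum_mul, ← Finset.sum_sub_distrib]
      calc |∑ δ ∈ T, (a η (α + W.mulVec δ) * c n (β - δ)
              - a η (α + W.mulVec δ) * f ((P^n).mulVec (castV β)))|
          ≤ ∑ δ ∈ T, |a η (α + W.mulVec δ) * c n (β - δ)
              - a η (α + W.mulVec δ) * f ((P^n).mulVec (castV β))| :=
            Finset.abs_sum_le_sum_abs _ _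
        _ ≤ ∑ δ ∈ T, |a η (α + W.mulVec δ)| * (2 * θ') := by
            refine Finset.sum_le_sum (fun δ hδ => ?_)
            rw [← mul_sub, abs_mul]
            exact mul_le_mul_of_nonneg_left (hF6 δ hδ) (abs_nonneg _)
        _ = 2 * θ' * A := by rw [← Finset.sum_mul, hA]; ring
    -- F8
    have hF8 : |f x₀ - f ((P^n).mulVec (castV β))| < θ' := by
      have := hτ hF1
      rw [Real.dist_eq, abs_sub_comm] at this
      exact this
    have hF9 : |f ((P^n).mulVec (castV β)) - f ((P^(n+1)).mulVec (castV (W.mulVec β + α)))| < θ' := by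
      have := hτ hF3
      rwa [Real.dist_eq, abs_sub_comm] at this
    -- combine
    have htri : |f x₀ - s * f x₀|
        ≤ |f x₀ - f ((P^n).mulVec (castV β))|
          + |f ((P^n).mulVec (castV β)) - f ((P^(n+1)).mulVec (castV (W.mulVec β + α)))|
          + |f ((P^(n+1)).mulVec (castV (W.mulVec β + α))) - c (n+1) (W.mulVec β + α)|
          + |c (n+1) (W.mulVec β + α) - s * f ((P^n).mulVec (castV β))|
          + |s * f ((P^n).mulVec (castV β)) - s * f x₀| := by
      have t1 := abs_sub_le (f x₀) (f ((P^n).mulVec (castV β))) (s * f x₀)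
      have t2 := abs_sub_le (f ((P^n).mulVec (castV β)))
        (f ((P^(n+1)).mulVec (castV (W.mulVec β + α)))) (s * f x₀)
      have t3 := abs_sub_le (f ((P^(n+1)).mulVec (castV (W.mulVec β + α))))
        (c (n+1) (W.mulVec β + α)) (s * f x₀)
      have t4 := abs_sub_le (c (n+1) (W.mulVec β + α))
        (s * f ((P^n).mulVec (castV β))) (s * f x₀)
      linarith
    have hlast : |s * f ((P^n).mulVec (castV β)) - s * f x₀| ≤ A * θ' := by
      rw [← mul_sub, abs_mul]
      have h1 : |f ((P^n).mulVec (castV β)) - f x₀| ≤ θ' := by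
        rw [abs_sub_comm] at hF8; linarith
      exact mul_le_mul hsA h1 (abs_nonneg _) hA0
    have : |f x₀ - s * f x₀| < θ' + θ' + θ' + 2 * θ' * A + A * θ' := by linarith
    have hfin : θ' + θ' + θ' + 2 * θ' * A + A * θ' ≤ θ * (3 + 3*A) / (8 * (A+1)) := by
      rw [hθ'def]; ring_nf; nlinarith [hθ.le, hA0]
    have hB8 : (0:ℝ) < 8 * (A + 1) := by linarith
    have hfin2 : θ * (3 + 3*A) / (8 * (A+1)) < θ := by
      rw [div_lt_iff₀ hB8]
      nlinarith
    linarith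
  -- conclude
  have hzero : f x₀ - s * f x₀ = 0 := by
    by_contra hne
    have habs : 0 < |f x₀ - s * f x₀| := abs_pos.mpr hne
    exact absurd (key _ habs) (lt_irrefl _)
  have : (1 - s) * f x₀ = 0 := by ring_nf; ring_nf at hzero; linarith
  rcases mul_eq_zero.mp this with h | h
  · linarith
  · exact absurd h hx₀
end

section
/- In the ring Λ of Laurent polynomials in two variables over ℂ, let J := ⟨z₁ − 1, z₂ − 1⟩, I₀ := ⟨z₁⁴ − 1, z₂² − 1⟩ : J (the quotient ideal of the ideal generated by the monomial differences associated to the columns (4,0),(0,2) of W₀), and I₁ := ⟨z₁⁴ − 1, z₁^{−4}z₂² − 1⟩ : J (associated to the columns (4,0),(−4,2) of W₁). Then I₀ = I₁, and this common ideal equals the ideal generated by (z₁³ + z₁² + z₁ + 1)(z₂ + 1), z₁⁴ − 1, and z₂² − 1. -/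
/-- The ring `Λ = ℂ[z₁^{±1}, z₂^{±1}]` of Laurent polynomials in two variables,
realized as the group algebra of `ℤ²` over `ℂ`. -/
abbrev Laurent2 : Type := AddMonoidAlgebra ℂ (ℤ × ℤ)

/-- The Laurent monomial `z^α` for `α ∈ ℤ²`. -/
noncomputable def zmon (α : ℤ × ℤ) : Laurent2 := AddMonoidAlgebra.single α 1

/-- The ideal `J = ⟨z₁ − 1, z₂ − 1⟩`. -/
noncomputable def Jid : Ideal Laurent2 :=
  Ideal.span {zmon (1, 0) - 1, zmon (0, 1) - 1}

/-- `I₀ = ⟨z₁⁴ − 1, z₂² − 1⟩ : J` (columns `(4,0)`, `(0,2)` of `W₀`). -/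
noncomputable def I0 : Ideal Laurent2 :=
  (Ideal.span {zmon (4, 0) - 1, zmon (0, 2) - 1}).colon Jid

/-- `I₁ = ⟨z₁⁴ − 1, z₁⁻⁴z₂² − 1⟩ : J` (columns `(4,0)`, `(−4,2)` of `W₁`). -/
noncomputable def I1 : Ideal Laurent2 :=
  (Ideal.span {zmon (4, 0) - 1, zmon (-4, 2) - 1}).colon Jid

/-!
Reducing exponents modulo the lattice `W₀ℤ² = W₁ℤ²` identifies `Λ/⟨z^{W₀} − 1⟩` with the group
algebra `ℂ[A]` of `A = ℤ/4 × ℤ/2`. The ideal `⟨z^X − 1⟩` only depends on the lattice spanned by the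
columns of `X`, whence `I₀ = I₁`. As `z₁` and `z₂` generate `A`, an element of `Λ` lies in `I₀` iff
its image in `ℂ[A]` is invariant under all translations, i.e. is a multiple of the norm element
`∑_{a ∈ A} a`; and that is the image of `(z₁³ + z₁² + z₁ + 1)(z₂ + 1)`.
-/

namespace AddMonoidAlgebra

variable {R G H : Type*} [CommRing R] [AddCommGroup G] [AddCommGroup H]

def monomialKernel (I : Ideal R[G]) : AddSubgroup G where
  carrier := {α | single α 1 - 1 ∈ I}
  zero_mem' := by simp [← one_def]
  add_mem' {α β} hα hβ := by
    have h : single (α + β) (1 : R) - 1 = single α 1 * (single β 1 - 1) + (single α 1 - 1) := by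
      simp only [mul_sub, single_mul_single, mul_one]
      ring
    simpa only [Set.mem_ofPred_eq, h] using add_mem (I.mul_mem_left _ hβ) hα
  neg_mem' {α} hα := by
    have h : single (-α) (1 : R) - 1 = -(single (-α) 1 * (single α 1 - 1)) := by
      rw [mul_sub, single_mul_single, neg_add_cancel, one_mul, mul_one, ← one_def]
      ring
    simpa only [Set.mem_ofPred_eq, h] using neg_mem (I.mul_mem_left _ hα)

theorem mem_monomialKernel {I : Ideal R[G]} {α : G} :
    α ∈ monomialKernel I ↔ single α 1 - 1 ∈ I :=
  Iff.rfl

theorem single_sub_single_mem {I : Ideal R[G]} {α β : G} (h : α - β ∈ monomialKernel I) (r : R) :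
    single α r - single β r ∈ I := by
  have e : single α r - single β r = single β r * (single (α - β) 1 - 1) := by
    rw [mul_sub, single_mul_single, add_sub_cancel, mul_one, mul_one]
  exact e ▸ I.mul_mem_left _ h

theorem span_single_sub_one_mono {S T : Set G} (h : S ⊆ AddSubgroup.closure T) :
    Ideal.span ((fun α ↦ single α (1 : R) - 1) '' S) ≤
      Ideal.span ((fun α ↦ single α (1 : R) - 1) '' T) := by
  have hT :
      AddSubgroup.closure T ≤ monomialKernel (Ideal.span ((fun α ↦ single α (1 : R) - 1) '' T)) :=
    (AddSubgroup.closure_le _).2 fun t ht ↦ mem_monomialKernel.2 (Ideal.subset_span ⟨t, ht, rfl⟩)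
  exact Ideal.span_le.2 (Set.image_subset_iff.2 fun s hs ↦ hT (h hs))

theorem mem_colon_single_sub_one_iff {S : Set G} (hS : AddSubgroup.closure S = ⊤)
    {I : Ideal R[G]} {f : R[G]} :
    f ∈ I.colon ((fun α ↦ single α (1 : R) - 1) '' S) ↔ ∀ α, f * (single α 1 - 1) ∈ I := by
  refine ⟨fun hf α ↦ ?_, fun hf ↦ Submodule.mem_colon.2 ?_⟩
  · have hS' : S ⊆ monomialKernel (I.colon {f}) := fun s hs ↦ mem_monomialKernel.2 <| by
      rw [Submodule.mem_colon_singleton, smul_eq_mul, mul_comm]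
      exact Submodule.mem_colon.1 hf _ ⟨s, hs, rfl⟩
    have hα : α ∈ monomialKernel (I.colon {f}) :=
      (AddSubgroup.closure_le _).2 hS' (hS ▸ AddSubgroup.mem_top α)
    simpa [mem_monomialKernel, mul_comm] using hα
  · rintro _ ⟨α, -, rfl⟩
    exact hf α

theorem ker_mapDomainAlgHom {φ : G →+ H} (hφ : Function.Surjective φ) :
    RingHom.ker (mapDomainAlgHom R R φ) =
      Ideal.span ((fun α ↦ single α (1 : R) - 1) '' (φ.ker : Set G)) := by
  set I := Ideal.span ((fun α ↦ single α (1 : R) - 1) '' (φ.ker : Set G))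
  have hker : φ.ker ≤ monomialKernel I := fun α hα ↦ Ideal.subset_span ⟨α, hα, rfl⟩
  refine le_antisymm (fun f hf ↦ ?_) (Ideal.span_le.2 ?_)
  · let s := Function.surjInv hφ
    have hs : ∀ f : R[G], f - mapDomain s (mapDomainAlgHom R R φ f) ∈ I := fun f ↦ by
      induction f using induction_linear with
      | zero => simp
      | add x y hx hy => simpa [mapDomain_add, add_sub_add_comm] using add_mem hx hy
      | single α r =>
        rw [mapDomainAlgHom_apply, mapDomain_single, mapDomain_single]
        exact single_sub_single_mem (hker (by
          rw [AddMonoidHom.mem_ker, map_sub, Function.surjInv_eq hφ, sub_self])) r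
    simpa [RingHom.mem_ker.1 hf] using hs f
  · rintro _ ⟨α, hα, rfl⟩
    rw [SetLike.mem_coe, RingHom.mem_ker, map_sub, map_one, mapDomainAlgHom_apply,
      mapDomain_single, (AddMonoidHom.mem_ker).1 hα, ← one_def, sub_self]

variable [Fintype H]

theorem sum_single_mul_single (h : H) :
    (∑ a, single a (1 : R)) * single h 1 = ∑ a, single a 1 := by
  simp only [Finset.sum_mul, single_mul_single, mul_one]
  exact Fintype.sum_equiv (Equiv.addRight h) _ _ fun _ ↦ rfl

theorem eq_smul_sum_single_of_mul_single_eq {F : R[H]} (hF : ∀ h, F * single h 1 = F) :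
    F = F.coeff 0 • ∑ h, single h 1 := by
  ext a
  have h := congr($(hF a).coeff a)
  rw [coeff_mul_single_apply, add_neg_cancel, mul_one] at h
  simp [coeff_sum, h]

end AddMonoidAlgebra

theorem AddSubgroup.mem_closure_pair_of_zsmul_add_zsmul_eq {G : Type*} [AddCommGroup G]
    {x y z : G} (k l : ℤ) (h : k • x + l • y = z) : z ∈ AddSubgroup.closure {x, y} := by
  rw [← h]
  exact add_mem (zsmul_mem (subset_closure (Set.mem_insert x {y})) k)
    (zsmul_mem (subset_closure (Set.mem_insert_of_mem x (Set.mem_singleton y))) l)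

open AddMonoidAlgebra AddSubgroup

-- The quotient map `ℤ² → ℤ²/W₀ℤ² ≅ ℤ/4 × ℤ/2`.
def reduceW0 : ℤ × ℤ →+ ZMod 4 × ZMod 2 :=
  (Int.castAddHom (ZMod 4)).prodMap (Int.castAddHom (ZMod 2))

local notation "π" => mapDomainAlgHom ℂ ℂ reduceW0

theorem reduceW0_surjective : Function.Surjective reduceW0 :=
  Prod.map_surjective.2 ⟨ZMod.intCast_surjective, ZMod.intCast_surjective⟩

theorem zmon_sub_one_pair (α β : ℤ × ℤ) :
    ({zmon α - 1, zmon β - 1} : Set Laurent2) = (fun γ ↦ single γ (1 : ℂ) - 1) '' {α, β} := by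
  rw [Set.image_pair]
  rfl

theorem span_W0_eq_span_W1 :
    Ideal.span {zmon (4, 0) - 1, zmon (0, 2) - 1} =
      Ideal.span {zmon (4, 0) - 1, zmon (-4, 2) - 1} := by
  simp only [zmon_sub_one_pair]
  apply le_antisymm <;> apply span_single_sub_one_mono <;> rintro _ (rfl | rfl)
  · exact mem_closure_pair_of_zsmul_add_zsmul_eq 1 0 (by simp)
  · exact mem_closure_pair_of_zsmul_add_zsmul_eq 1 1 (by simp)
  · exact mem_closure_pair_of_zsmul_add_zsmul_eq 1 0 (by simp)
  · exact mem_closure_pair_of_zsmul_add_zsmul_eq (-1) 1 (by simp)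

theorem span_W0_eq_ker :
    Ideal.span {zmon (4, 0) - 1, zmon (0, 2) - 1} =
      RingHom.ker π := by
  rw [ker_mapDomainAlgHom reduceW0_surjective, zmon_sub_one_pair]
  apply le_antisymm <;> apply span_single_sub_one_mono
  · rintro _ (rfl | rfl) <;> exact subset_closure rfl
  · rintro ⟨a, b⟩ hab
    obtain ⟨⟨k, rfl⟩, ⟨l, rfl⟩⟩ : (4 : ℤ) ∣ a ∧ (2 : ℤ) ∣ b := by
      simpa [reduceW0, ZMod.intCast_zmod_eq_zero_iff_dvd] using hab
    exact mem_closure_pair_of_zsmul_add_zsmul_eq k l (by simp [mul_comm])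

theorem mem_I0_iff {f : Laurent2} :
    f ∈ I0 ↔ ∀ h, π f * single h 1 = π f := by
  have hgen : AddSubgroup.closure {((1 : ℤ), (0 : ℤ)), (0, 1)} = ⊤ :=
    eq_top_iff.2 fun ⟨a, b⟩ _ ↦ mem_closure_pair_of_zsmul_add_zsmul_eq a b (by simp)
  rw [I0, Jid, Ideal.colon_span, zmon_sub_one_pair (1, 0), mem_colon_single_sub_one_iff hgen,
    span_W0_eq_ker, reduceW0_surjective.forall]
  simp only [RingHom.mem_ker, map_mul, map_sub, mapDomainAlgHom_apply, mapDomain_single,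
    mul_sub, mul_one, sub_eq_zero]

theorem map_generator_eq_sum_single :
    π ((zmon (3, 0) + zmon (2, 0) + zmon (1, 0) + 1) * (zmon (0, 1) + 1)) = ∑ h, single h 1 := by
  rw [Fintype.sum_prod_type, show (Finset.univ : Finset (ZMod 4)) = {0, 1, 2, 3} by decide,
    show (Finset.univ : Finset (ZMod 2)) = {0, 1} by decide]
  simp only [map_mul, map_add, map_one, zmon, mapDomainAlgHom_apply, mapDomain_single]
  simp +decide [reduceW0, Finset.sum_insert, one_def, add_mul, mul_add, single_mul_single]
  abel

/-- The two quotient ideals coincide, and the common ideal is generated by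
`(z₁³ + z₁² + z₁ + 1)(z₂ + 1)`, `z₁⁴ − 1` and `z₂² − 1`. -/
theorem stmt11 :
    I0 = I1 ∧
    I0 = Ideal.span
      {(zmon (3, 0) + zmon (2, 0) + zmon (1, 0) + 1) * (zmon (0, 1) + 1),
        zmon (4, 0) - 1, zmon (0, 2) - 1} := by
  refine ⟨by rw [I0, I1, span_W0_eq_span_W1], ?_⟩
  set p := (zmon (3, 0) + zmon (2, 0) + zmon (1, 0) + 1) * (zmon (0, 1) + 1)
  apply le_antisymm
  · intro f hf
    set c := (π f).coeff 0
    have hrem : f - c • p ∈ Ideal.span {zmon (4, 0) - 1, zmon (0, 2) - 1} := by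
      rw [span_W0_eq_ker, RingHom.mem_ker, map_sub, map_smul, map_generator_eq_sum_single,
        ← eq_smul_sum_single_of_mul_single_eq (mem_I0_iff.1 hf), sub_self]
    rw [← add_sub_cancel (c • p) f]
    exact add_mem (Submodule.smul_of_tower_mem _ c (Ideal.subset_span (Set.mem_insert p _)))
      (Ideal.span_mono (Set.subset_insert _ _) hrem)
  · refine Ideal.span_le.2 ?_
    rintro _ (rfl | rfl | rfl)
    · exact mem_I0_iff.2 fun h ↦ by rw [map_generator_eq_sum_single, sum_single_mul_single]
    all_goals exact Ideal.le_colon (Ideal.subset_span (by simp))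
end

section
/- Let W ∈ {W₀, W₁} and let a : ℤ² → ℝ be a finitely supported sequence such that S_{a,W} c = 0 for every constant sequence c : ℤ² → ℝ. Then there exist finitely supported sequences b₁, b₂ : ℤ² → ℝ such that for every bounded c : ℤ² → ℝ, S_{a,W} c = S_{b₁,W}(∇₁c) + S_{b₂,W}(∇₂c). -/
/-- Backward difference `∇₁c = c(· − e₁) − c`. -/
def nabla1 (c : Z2 → ℝ) : Z2 → ℝ := fun α => c (α - ![1, 0]) - c α

/-- Backward difference `∇₂c = c(· − e₂) − c`. -/
def nabla2 (c : Z2 → ℝ) : Z2 → ℝ := fun α => c (α - ![0, 1]) - c α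

/-! The hypothesis says that `a` sums to zero over every coset `γ + W ℤ²`. With `u = W(-e₁)` and
`v = W(-e₂)`, reindexing turns `S_{Δ_u b, W}` into `S_{b,W} ∘ ∇₁` and `S_{Δ_v b, W}` into
`S_{b,W} ∘ ∇₂` (forward differences `Δ`), so it suffices to write `a = Δ_u g₁ + Δ_v g₂` with
finitely supported `g₁, g₂`.

A finitely supported `f` whose sum over every line `γ + ℤv` vanishes is `Δ_v g` for
`g γ = -∑_{n ≥ 0} f (γ + n v)`; the zero line sums make `g` finitely supported. Since `W` is upper
triangular, `u 1 = 0`: put the sum of `a` over each line `γ + ℤv` at the unique point `x` of that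
line with `x 1 / v 1 = 0`. The resulting `d` has zero sums along the lines `γ + ℤu` (they stay
inside that set and collect the sum of `a` over a coset), and `a - d` has zero sums along the
lines `γ + ℤv`; telescope each. -/

open Function Matrix fwdDiff

section LineSums

variable {G : Type*} [AddCommGroup G]

noncomputable def lineSum (v : G) (f : G → ℝ) (γ : G) : ℝ := ∑' k : ℤ, f (γ + k • v)

lemma injective_add_zsmul {v : G} (hv : Injective fun k : ℤ => k • v) (γ : G) :
    Injective fun k : ℤ => γ + k • v :=
  fun _ _ h => hv (add_left_cancel h)

lemma summable_add_zsmul {v : G} (hv : Injective fun k : ℤ => k • v) {f : G → ℝ}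
    (hf : (support f).Finite) (γ : G) : Summable fun k : ℤ => f (γ + k • v) :=
  (summable_of_hasFiniteSupport hf).comp_injective (injective_add_zsmul hv γ)

lemma lineSum_add_zsmul (v : G) (f : G → ℝ) (γ : G) (k : ℤ) :
    lineSum v f (γ + k • v) = lineSum v f γ := by
  unfold lineSum
  rw [← (Equiv.addRight k).tsum_eq (fun j : ℤ => f (γ + j • v))]
  simp only [Equiv.coe_addRight, add_smul, add_assoc, add_comm (k • v)]

lemma lineSum_sub {v : G} (hv : Injective fun k : ℤ => k • v) {f g : G → ℝ}
    (hf : (support f).Finite) (hg : (support g).Finite) (γ : G) :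
    lineSum v (f - g) γ = lineSum v f γ - lineSum v g γ :=
  (summable_add_zsmul hv hf γ).tsum_sub (summable_add_zsmul hv hg γ)

lemma Set.Finite.setOf_exists_neg_and_exists_nonneg {v : G}
    (hv : Injective fun k : ℤ => k • v) {S : Set G} (hS : S.Finite) :
    {γ | (∃ k : ℤ, k < 0 ∧ γ + k • v ∈ S) ∧ ∃ k : ℤ, 0 ≤ k ∧ γ + k • v ∈ S}.Finite := by
  have hline : ∀ y ∈ S, {m : ℤ | 0 < m ∧ ∃ n : ℤ, m ≤ n ∧ y + n • v ∈ S}.Finite := by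
    intro y _
    obtain ⟨b, hb⟩ := (hS.preimage (injective_add_zsmul hv y).injOn).bddAbove
    refine (Set.finite_Icc 1 b).subset fun m ⟨hm, n, hmn, hnS⟩ => ⟨hm, ?_⟩
    exact hmn.trans (hb hnS)
  refine (hS.biUnion fun y hy => (hline y hy).image fun m => y + m • v).subset ?_
  rintro γ ⟨⟨j, hj, hjS⟩, k, hk, hkS⟩
  refine Set.mem_biUnion hjS ⟨-j, ⟨by omega, k - j, by omega, ?_⟩, ?_⟩
  · rwa [add_assoc, ← add_smul, add_sub_cancel]
  · show γ + j • v + (-j) • v = γ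
    rw [neg_smul, add_neg_cancel_right]

theorem exists_finite_support_eq_fwdDiff {v : G} (hv : Injective fun k : ℤ => k • v)
    {f : G → ℝ} (hf : (support f).Finite) (hsum : ∀ γ, lineSum v f γ = 0) :
    ∃ g : G → ℝ, (support g).Finite ∧ f = Δ_[v] g := by
  set g : G → ℝ := fun γ => -∑' n : ℕ, f (γ + (n : ℤ) • v)
  have hnat : ∀ γ, Summable fun n : ℕ => f (γ + (n : ℤ) • v) := fun γ =>
    (summable_add_zsmul hv hf γ).comp_injective Nat.cast_injective
  refine ⟨g, (hf.setOf_exists_neg_and_exists_nonneg hv).subset fun γ hγ => ⟨?_, ?_⟩,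
    funext fun γ => ?_⟩
  · by_contra! h
    have hneg : Summable fun n : ℕ => f (γ + (-((n : ℤ) + 1)) • v) :=
      (summable_add_zsmul hv hf γ).comp_injective
        (neg_injective.comp ((add_left_injective 1).comp Nat.cast_injective))
    have hsγ := hsum γ
    rw [lineSum, tsum_of_nat_of_neg_add_one (f := fun k : ℤ => f (γ + k • v)) (hnat γ) hneg,
      tsum_congr fun n : ℕ => notMem_support.mp (h (-((n : ℤ) + 1)) (by omega)), tsum_zero,
      add_zero] at hsγ
    exact hγ (neg_eq_zero.mpr hsγ)
  · by_contra! h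
    exact hγ (neg_eq_zero.mpr
      ((tsum_congr fun n => notMem_support.mp (h _ (by omega))).trans tsum_zero))
  · have hshift : ∀ n : ℕ, f (γ + v + (n : ℤ) • v) = f (γ + ((n + 1 : ℕ) : ℤ) • v) := fun n => by
      rw [Nat.cast_succ, add_smul, one_smul, add_right_comm, add_assoc]
    show f γ = -∑' n : ℕ, f (γ + v + (n : ℤ) • v) - -∑' n : ℕ, f (γ + (n : ℤ) • v)
    rw [tsum_congr hshift, (hnat γ).tsum_eq_zero_add, Nat.cast_zero, zero_smul, add_zero]
    ring

lemma finite_support_fwdDiff {b : G → ℝ} (hb : (support b).Finite) (x : G) :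
    (support (Δ_[x] b)).Finite :=
  ((hb.preimage (add_left_injective x).injOn).union hb).subset (support_sub _ _)

lemma lineSum_lineSum {u v : G} (huv : Injective fun p : ℤ × ℤ => p.1 • u + p.2 • v)
    {f : G → ℝ} (hf : (support f).Finite) (γ : G) :
    lineSum u (lineSum v f) γ = ∑' p : ℤ × ℤ, f (γ + p.1 • u + p.2 • v) := by
  have hinj : Injective fun p : ℤ × ℤ => γ + p.1 • u + p.2 • v := fun p q h =>
    huv (by simpa only [add_assoc, add_right_inj] using h)
  have hF := (summable_of_hasFiniteSupport hf).comp_injective hinj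
  exact (hF.tsum_prod' fun k => hF.comp_injective (Prod.mk_right_injective k)).symm

end LineSums

lemma injective_zsmul_of_apply_ne_zero {ι : Type*} {v : ι → ℤ} {i : ι} (hvi : v i ≠ 0) :
    Injective fun k : ℤ => k • v :=
  fun k k' h => mul_right_cancel₀ hvi (by simpa using congrFun h i)

section Concentration

variable {u v : Z2}

lemma injective_smul_add_smul (hu1 : u 1 = 0) (hu0 : u 0 ≠ 0) (hv1 : v 1 ≠ 0) :
    Injective fun p : ℤ × ℤ => p.1 • u + p.2 • v := by
  intro p q h
  have h1 : p.2 * v 1 = q.2 * v 1 := by simpa [hu1] using congrFun h 1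
  have h2 := mul_right_cancel₀ hv1 h1
  have h0 : p.1 * u 0 = q.1 * u 0 := by simpa [h2] using congrFun h 0
  exact Prod.ext (mul_right_cancel₀ hu0 h0) h2

lemma add_zsmul_apply_one_div (hv1 : v 1 ≠ 0) (γ : Z2) (k : ℤ) :
    (γ + k • v) 1 / v 1 = γ 1 / v 1 + k := by
  simpa using Int.add_mul_ediv_right (γ 1) k hv1

/-- Each line `γ + ℤ v` with `v 1 ≠ 0` meets `{γ | γ 1 / v 1 = 0}` in exactly one point (Euclidean
division), and this set is invariant under translations by vectors `u` with `u 1 = 0`. -/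
def concentrate (v : Z2) (s : Z2 → ℝ) : Z2 → ℝ := fun γ => if γ 1 / v 1 = 0 then s γ else 0

lemma lineSum_concentrate (hv1 : v 1 ≠ 0) {s : Z2 → ℝ} (hs : ∀ γ (k : ℤ), s (γ + k • v) = s γ)
    (γ : Z2) : lineSum v (concentrate v s) γ = s γ := by
  have hline : ∀ k : ℤ, concentrate v s (γ + k • v) = if k = -(γ 1 / v 1) then s γ else 0 := by
    intro k
    simp only [concentrate, add_zsmul_apply_one_div hv1, hs]
    exact if_congr (by omega) rfl rfl
  rw [lineSum, tsum_congr hline, tsum_ite_eq]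

lemma lineSum_concentrate_of_apply_one_eq_zero (hu1 : u 1 = 0) (s : Z2 → ℝ) (γ : Z2) :
    lineSum u (concentrate v s) γ = concentrate v (lineSum u s) γ := by
  have hline : ∀ k : ℤ, (γ + k • u) 1 = γ 1 := by simp [hu1]
  simp only [lineSum, concentrate, hline]
  split_ifs
  · rfl
  · exact tsum_zero

lemma finite_support_concentrate_lineSum (hv1 : v 1 ≠ 0) {a : Z2 → ℝ}
    (ha : (support a).Finite) : (support (concentrate v (lineSum v a))).Finite := by
  refine (ha.image fun x => x - (x 1 / v 1) • v).subset fun γ hγ => ?_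
  by_cases h : γ 1 / v 1 = 0
  · obtain ⟨k, hk⟩ : ∃ k : ℤ, a (γ + k • v) ≠ 0 := by
      by_contra! h'
      exact hγ (by simp only [concentrate, if_pos h, lineSum, h', tsum_zero])
    refine ⟨γ + k • v, hk, ?_⟩
    simp only [add_zsmul_apply_one_div hv1, h, zero_add, add_sub_cancel_right]
  · exact absurd (if_neg h) hγ

theorem exists_eq_fwdDiff_add_fwdDiff (hu1 : u 1 = 0) (hu0 : u 0 ≠ 0) (hv1 : v 1 ≠ 0)
    {a : Z2 → ℝ} (ha : (support a).Finite)
    (hsum : ∀ γ, ∑' p : ℤ × ℤ, a (γ + p.1 • u + p.2 • v) = 0) :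
    ∃ g₁ g₂ : Z2 → ℝ, (support g₁).Finite ∧ (support g₂).Finite ∧ a = Δ_[u] g₁ + Δ_[v] g₂ := by
  have hv := injective_zsmul_of_apply_ne_zero hv1
  set d := concentrate v (lineSum v a)
  have hd : (support d).Finite := finite_support_concentrate_lineSum hv1 ha
  obtain ⟨g₁, hg₁, hd_eq⟩ :=
    exists_finite_support_eq_fwdDiff (injective_zsmul_of_apply_ne_zero hu0) hd fun γ => by
      rw [lineSum_concentrate_of_apply_one_eq_zero hu1, concentrate,
        lineSum_lineSum (injective_smul_add_smul hu1 hu0 hv1) ha, hsum, ite_self]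
  obtain ⟨g₂, hg₂, hrest_eq⟩ :=
    exists_finite_support_eq_fwdDiff (f := a - d) hv ((ha.union hd).subset (support_sub a d))
      fun γ => by
        rw [lineSum_sub hv ha hd, lineSum_concentrate hv1 (lineSum_add_zsmul v a), sub_self]
  refine ⟨g₁, g₂, hg₁, hg₂, ?_⟩
  rw [← hd_eq, ← hrest_eq, add_sub_cancel]

end Concentration

section Subdivision

variable {W : Matrix (Fin 2) (Fin 2) ℤ}

lemma summable_subd (hW : W.det ≠ 0) {a : Z2 → ℝ} (ha : (support a).Finite) (c : Z2 → ℝ)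
    (β : Z2) : Summable fun α => a (β - W *ᵥ α) * c α := by
  have hinj : Injective fun α => β - W *ᵥ α :=
    sub_right_injective.comp (mulVec_injective_of_det_ne_zero hW)
  exact summable_of_hasFiniteSupport
    ((ha.preimage hinj.injOn).subset (support_mul_subset_left _ _))

lemma subd_add (hW : W.det ≠ 0) {a b : Z2 → ℝ} (ha : (support a).Finite)
    (hb : (support b).Finite) (c : Z2 → ℝ) : subd (a + b) W c = subd a W c + subd b W c :=
  funext fun β => by
    simp only [subd, Pi.add_apply, add_mul]
    exact (summable_subd hW ha c β).tsum_add (summable_subd hW hb c β)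

lemma subd_sub (hW : W.det ≠ 0) {a b : Z2 → ℝ} (ha : (support a).Finite)
    (hb : (support b).Finite) (c : Z2 → ℝ) : subd (a - b) W c = subd a W c - subd b W c :=
  funext fun β => by
    simp only [subd, Pi.sub_apply, sub_mul]
    exact (summable_subd hW ha c β).tsum_sub (summable_subd hW hb c β)

lemma subd_sub_right (hW : W.det ≠ 0) {b : Z2 → ℝ} (hb : (support b).Finite) (c c' : Z2 → ℝ) :
    subd b W (c - c') = subd b W c - subd b W c' :=
  funext fun β => by
    simp only [subd, Pi.sub_apply, mul_sub]
    exact (summable_subd hW hb c β).tsum_sub (summable_subd hW hb c' β)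

lemma subd_comp_add_mulVec (b c : Z2 → ℝ) (e : Z2) :
    subd (fun γ => b (γ + W *ᵥ e)) W c = subd b W (fun α => c (α + e)) :=
  funext fun β => by
    unfold subd
    rw [← (Equiv.addRight e).tsum_eq fun α => b (β - W *ᵥ α + W *ᵥ e) * c α]
    simp only [Equiv.coe_addRight, mulVec_add, sub_add_eq_sub_sub, sub_add_cancel]

theorem subd_fwdDiff (hW : W.det ≠ 0) {b : Z2 → ℝ} (hb : (support b).Finite) (c : Z2 → ℝ)
    (e : Z2) : subd (Δ_[W *ᵥ e] b) W c = subd b W (Δ_[e] c) :=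
  calc subd (Δ_[W *ᵥ e] b) W c
      = subd (fun γ => b (γ + W *ᵥ e)) W c - subd b W c :=
        subd_sub hW (hb.preimage (add_left_injective _).injOn) hb c
    _ = subd b W (fun α => c (α + e)) - subd b W c := by rw [subd_comp_add_mulVec]
    _ = subd b W (Δ_[e] c) := (subd_sub_right hW hb _ _).symm

lemma nabla1_eq_fwdDiff (c : Z2 → ℝ) : nabla1 c = Δ_[-![1, 0]] c :=
  funext fun α => by simp only [nabla1, fwdDiff, sub_eq_add_neg]

lemma nabla2_eq_fwdDiff (c : Z2 → ℝ) : nabla2 c = Δ_[-![0, 1]] c :=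
  funext fun α => by simp only [nabla2, fwdDiff, sub_eq_add_neg]

lemma tsum_coset_eq_zero {a : Z2 → ℝ} (h0 : subd a W (fun _ => 1) = 0) (γ : Z2) :
    ∑' p : ℤ × ℤ, a (γ + p.1 • (W *ᵥ -![1, 0]) + p.2 • (W *ᵥ -![0, 1])) = 0 := by
  have hmul : ∀ α : Z2, γ - W *ᵥ α = γ + α 0 • (W *ᵥ -![1, 0]) + α 1 • (W *ᵥ -![0, 1]) := by
    intro α
    have hα : α = α 0 • ![1, 0] + α 1 • ![0, 1] := by ext i; fin_cases i <;> simp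
    conv_lhs => rw [hα]
    simp only [mulVec_add, mulVec_smul, mulVec_neg, smul_neg]
    abel
  have h := congrFun h0 γ
  simp only [subd, mul_one, Pi.zero_apply, hmul] at h
  rw [← (piFinTwoEquiv fun _ => ℤ).tsum_eq]
  exact h

theorem exists_subd_eq_subd_nabla1_add_subd_nabla2 (h10 : W 1 0 = 0) (h00 : W 0 0 ≠ 0)
    (h11 : W 1 1 ≠ 0) {a : Z2 → ℝ} (ha : (support a).Finite) (h0 : subd a W (fun _ => 1) = 0) :
    ∃ b1 b2 : Z2 → ℝ, (support b1).Finite ∧ (support b2).Finite ∧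
      ∀ c, subd a W c = subd b1 W (nabla1 c) + subd b2 W (nabla2 c) := by
  have hW : W.det ≠ 0 := by
    rw [det_fin_two, h10, mul_zero, sub_zero]
    exact mul_ne_zero h00 h11
  obtain ⟨g₁, g₂, hg₁, hg₂, rfl⟩ :=
    exists_eq_fwdDiff_add_fwdDiff (u := W *ᵥ -![1, 0]) (v := W *ᵥ -![0, 1]) (by simp [h10])
      (by simpa using h00) (by simpa using h11) ha (tsum_coset_eq_zero h0)
  refine ⟨g₁, g₂, hg₁, hg₂, fun c => ?_⟩
  rw [subd_add hW (finite_support_fwdDiff hg₁ _) (finite_support_fwdDiff hg₂ _),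
    subd_fwdDiff hW hg₁, subd_fwdDiff hW hg₂, nabla1_eq_fwdDiff, nabla2_eq_fwdDiff]

end Subdivision

/-- Let `W ∈ {W₀, W₁}` and let `a` be a finitely supported mask with `S_{a,W} c = 0`
for every constant sequence `c`. Then there are finitely supported `b₁, b₂` with
`S_{a,W} c = S_{b₁,W}(∇₁c) + S_{b₂,W}(∇₂c)` for every bounded `c`. -/
theorem stmt12 (W : Matrix (Fin 2) (Fin 2) ℤ) (hW : W = W0 ∨ W = W1)
    (a : Z2 → ℝ) (ha : (Function.support a).Finite)
    (h0 : ∀ r : ℝ, subd a W (fun _ => r) = 0) :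
    ∃ b1 b2 : Z2 → ℝ,
      (Function.support b1).Finite ∧ (Function.support b2).Finite ∧
      ∀ c : Z2 → ℝ, Bdd c →
        subd a W c = fun β => subd b1 W (nabla1 c) β + subd b2 W (nabla2 c) β := by
  have hupper : W 1 0 = 0 ∧ W 0 0 ≠ 0 ∧ W 1 1 ≠ 0 := by
    rcases hW with rfl | rfl <;> simp [W0, W1]
  obtain ⟨b1, b2, hb1, hb2, h⟩ :=
    exists_subd_eq_subd_nabla1_add_subd_nabla2 hupper.1 hupper.2.1 hupper.2.2 ha (h0 1)
  exact ⟨b1, b2, hb1, hb2, fun c _ => h c⟩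
end

section
/- Let b₁, b₂ : ℤ → ℝ be finitely supported masks satisfying the interpolation condition b_i(2m) = δ_{m,0} for all m ∈ ℤ, i = 1,2. Define b̃₁(m) := Σ_{k∈ℤ} b₁(k) b₁(m − 2k), a₀ := b̃₁ ⊗ b₂ (i.e. a₀(m₁,m₂) = b̃₁(m₁)b₂(m₂)), and a₁ := a₀(U·). Then a₀(W₀ α) = δ_{α,0} and a₁(W₁ α) = δ_{α,0} for all α ∈ ℤ²; that is, a₀ is interpolatory with respect to W₀ and a₁ is interpolatory with respect to W₁. -/
/-- The unimodular shear matrix `U` with rows `(1,-2)` and `(0,1)`. -/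
def U : Matrix (Fin 2) (Fin 2) ℤ := !![1, -2; 0, 1]

/-- Let `b₁, b₂ : ℤ → ℝ` be finitely supported masks with `b_i(2m) = δ_{m,0}`.
With `b̃₁(m) = Σ_k b₁(k)b₁(m − 2k)`, `a₀ = b̃₁ ⊗ b₂` and `a₁ = a₀(U·)`, we have
`a₀(W₀α) = δ_{α,0}` and `a₁(W₁α) = δ_{α,0}` for all `α ∈ ℤ²`; that is, `a₀` is
interpolatory with respect to `W₀` and `a₁` is interpolatory with respect to `W₁`. -/
theorem stmt18 (b1 b2 : ℤ → ℝ)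
    (hb1 : (Function.support b1).Finite) (hb2 : (Function.support b2).Finite)
    (hi1 : ∀ m : ℤ, b1 (2 * m) = if m = 0 then 1 else 0)
    (hi2 : ∀ m : ℤ, b2 (2 * m) = if m = 0 then 1 else 0)
    (bt1 : ℤ → ℝ) (hbt1 : bt1 = fun m => ∑' k : ℤ, b1 k * b1 (m - 2 * k))
    (a0 : Z2 → ℝ) (ha0 : a0 = fun α => bt1 (α 0) * b2 (α 1))
    (a1 : Z2 → ℝ) (ha1 : a1 = fun α => a0 (U.mulVec α)) :
    (∀ α : Z2, a0 (W0.mulVec α) = if α = 0 then 1 else 0) ∧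
    (∀ α : Z2, a1 (W1.mulVec α) = if α = 0 then 1 else 0) := by
  subst hbt1 ha0 ha1
  have hbt : ∀ m : ℤ, (∑' k : ℤ, b1 k * b1 (4 * m - 2 * k)) = if m = 0 then 1 else 0 := by
    intro m
    have h1 : ∀ k : ℤ, b1 k * b1 (4 * m - 2 * k) = b1 k * (if 2 * m - k = 0 then 1 else 0) := by
      intro k
      have h : 4 * m - 2 * k = 2 * (2 * m - k) := by ring
      rw [h, hi1]
    rw [tsum_congr h1, tsum_eq_single (2 * m)]
    · simp [hi1 m]
    · intro k hk
      have : ¬ (2 * m - k = 0) := by omega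
      simp [this]
  have key : ∀ (x y : ℤ),
      (∑' k : ℤ, b1 k * b1 (4 * x - 2 * k)) * b2 (2 * y)
        = if (x = 0 ∧ y = 0) then 1 else 0 := by
    intro x y
    rw [hbt, hi2]
    by_cases hx : x = 0 <;> by_cases hy : y = 0 <;> simp [hx, hy]
  have heq : ∀ α : Z2, (α = 0) ↔ (α 0 = 0 ∧ α 1 = 0) := by
    intro α
    constructor
    · intro h; simp [h]
    · rintro ⟨h0, h1⟩
      funext i
      fin_cases i <;> simpa
  constructor
  · intro α
    have h0 : (W0.mulVec α) 0 = 4 * α 0 := by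
      simp [W0, Matrix.mulVec, dotProduct, Fin.sum_univ_two]
    have h1 : (W0.mulVec α) 1 = 2 * α 1 := by
      simp [W0, Matrix.mulVec, dotProduct, Fin.sum_univ_two]
    simp only [h0, h1, key, heq α]
  · intro α
    have h0 : (U.mulVec (W1.mulVec α)) 0 = 4 * (α 0 - 2 * α 1) := by
      simp [U, W1, Matrix.mulVec, dotProduct, Fin.sum_univ_two]; ring
    have h1 : (U.mulVec (W1.mulVec α)) 1 = 2 * α 1 := by
      simp [U, W1, Matrix.mulVec, dotProduct, Fin.sum_univ_two]
    simp only [h0, h1, key, heq α]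
    have hc : (α 0 - 2 * α 1 = 0 ∧ α 1 = 0) ↔ (α 0 = 0 ∧ α 1 = 0) := by omega
    simp only [hc]
end
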